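/- arXiv:1507.08146 — 10 statements merged into one kernel-verified Lean document; each statement's English description precedes it below -/
import Mathlib

section
/- Let A be a commutative algebra over a field k, let α, β be nonzero scalars in k, and let z be a nonzero element of the Leibniz center Z(A) = {z ∈ A : z·A = A·z = 0}. Then the linear map R : A⊗A → A⊗A defined by R(a⊗b) = α·(b⊗a) + β·(z⊗(a·b)) satisfies the quantum Yang-Baxter equation R¹²R²³R¹² = R²³R¹²R²³ if and only if A is a Leibniz algebra, i.e., (a·b)·c = a·(b·c) + (a·c)·b for all a, b, c ∈ A. -/
open TensorProduct

/-!
On a pure tensor `(a ⊗ b) ⊗ c` both sides of the Yang–Baxter equation expand to the same terms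
in `α³` and `α²β` (every term in which `z` is multiplied by something vanishes, as `z` is in the
Leibniz center), and they differ only in the `αβ²` terms, by
`αβ² • (z ⊗ z) ⊗ ((ab)c - a(bc) - (ac)b)`. Over a field `x ⊗ y = 0` with `x ≠ 0` forces `y = 0`,
so this difference vanishes exactly when the Leibniz identity holds for `a, b, c`.
-/

theorem tmul_eq_zero_iff_right {K V W : Type*} [Field K] [AddCommGroup V] [Module K V]
    [AddCommGroup W] [Module K W] {x : V} (hx : x ≠ 0) {y : W} :
    x ⊗ₜ[K] y = 0 ↔ y = 0 := by
  refine ⟨fun h ↦ ?_, fun h ↦ h ▸ tmul_zero W x⟩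
  obtain ⟨f, hf⟩ := Module.Projective.exists_dual_eq_one K hx
  simpa [hf] using congrArg ((TensorProduct.lid K W).toLinearMap ∘ₗ f.rTensor W) h

section LeibnizYangBaxter

variable {k A : Type*} [Field k] [AddCommGroup A] [Module k A]

def leg12 (R : A ⊗[k] A →ₗ[k] A ⊗[k] A) : (A ⊗[k] A) ⊗[k] A →ₗ[k] (A ⊗[k] A) ⊗[k] A :=
  TensorProduct.map R LinearMap.id

def leg23 (R : A ⊗[k] A →ₗ[k] A ⊗[k] A) : (A ⊗[k] A) ⊗[k] A →ₗ[k] (A ⊗[k] A) ⊗[k] A :=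
  (TensorProduct.assoc k A A A).symm.toLinearMap ∘ₗ
      TensorProduct.map LinearMap.id R ∘ₗ (TensorProduct.assoc k A A A).toLinearMap

variable (m : A →ₗ[k] A →ₗ[k] A) (α β : k) (z : A) (hzl : ∀ a : A, m z a = 0)
  (hzr : ∀ a : A, m a z = 0) {R : A ⊗[k] A →ₗ[k] A ⊗[k] A}
  (hR : ∀ a b : A, R (a ⊗ₜ[k] b) = α • (b ⊗ₜ[k] a) + β • (z ⊗ₜ[k] m a b))
include hR

theorem leg12_tmul (x y w : A) : leg12 R ((x ⊗ₜ[k] y) ⊗ₜ[k] w)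
    = α • ((y ⊗ₜ[k] x) ⊗ₜ[k] w) + β • ((z ⊗ₜ[k] m x y) ⊗ₜ[k] w) := by
  simp [leg12, hR, add_tmul, smul_tmul']

theorem leg23_tmul (x y w : A) : leg23 R ((x ⊗ₜ[k] y) ⊗ₜ[k] w)
    = α • ((x ⊗ₜ[k] w) ⊗ₜ[k] y) + β • ((x ⊗ₜ[k] z) ⊗ₜ[k] m y w) := by
  simp [leg23, hR, tmul_add, tmul_smul]

include hzl hzr in
theorem yangBaxter_defect_tmul (a b c : A) :
    (leg12 R ∘ₗ leg23 R ∘ₗ leg12 R - leg23 R ∘ₗ leg12 R ∘ₗ leg23 R)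
        ((a ⊗ₜ[k] b) ⊗ₜ[k] c) =
      (α * β * β) • ((z ⊗ₜ[k] z) ⊗ₜ[k] (m (m a b) c - m a (m b c) - m (m a c) b)) := by
  simp only [LinearMap.sub_apply, LinearMap.comp_apply, leg12_tmul m α β z hR,
    leg23_tmul m α β z hR, map_add, map_smul, map_zero, hzl, hzr, tmul_zero, zero_tmul, smul_zero,
    tmul_sub, smul_sub]
  module

end LeibnizYangBaxter

theorem stmt_0_general {k A : Type*} [Field k] [AddCommGroup A] [Module k A]
    (m : A →ₗ[k] A →ₗ[k] A)
    (α β : k) (hα : α ≠ 0) (hβ : β ≠ 0)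
    (z : A) (hz : z ≠ 0) (hzl : ∀ a : A, m z a = 0) (hzr : ∀ a : A, m a z = 0)
    (R : A ⊗[k] A →ₗ[k] A ⊗[k] A)
    (hR : ∀ a b : A, R (a ⊗ₜ[k] b) = α • (b ⊗ₜ[k] a) + β • (z ⊗ₜ[k] m a b))
    (R12 R23 : (A ⊗[k] A) ⊗[k] A →ₗ[k] (A ⊗[k] A) ⊗[k] A)
    (hR12 : R12 = TensorProduct.map R LinearMap.id)
    (hR23 : R23 = (TensorProduct.assoc k A A A).symm.toLinearMap ∘ₗ
      TensorProduct.map LinearMap.id R ∘ₗ (TensorProduct.assoc k A A A).toLinearMap) :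
    R12 ∘ₗ R23 ∘ₗ R12 = R23 ∘ₗ R12 ∘ₗ R23 ↔
      (∀ a b c : A, m (m a b) c = m a (m b c) + m (m a c) b) := by
  obtain rfl : R12 = leg12 R := hR12
  obtain rfl : R23 = leg23 R := hR23
  have hzz : z ⊗ₜ[k] z ≠ 0 := (tmul_eq_zero_iff_right hz).not.mpr hz
  have hαββ : α * β * β ≠ 0 := mul_ne_zero (mul_ne_zero hα hβ) hβ
  calc _ ↔ ∀ a b c : A, (leg12 R ∘ₗ leg23 R ∘ₗ leg12 R - leg23 R ∘ₗ leg12 R ∘ₗ leg23 R)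
          ((a ⊗ₜ[k] b) ⊗ₜ[k] c) = 0 := by
        simp only [LinearMap.sub_apply, sub_eq_zero]
        exact ⟨fun h _ _ _ ↦ by rw [h], ext_threefold⟩
    _ ↔ _ := by
        simp only [yangBaxter_defect_tmul m α β z hzl hzr hR, smul_eq_zero_iff_right hαββ,
          tmul_eq_zero_iff_right hzz, sub_sub, sub_eq_zero]

/-- For a commutative algebra `A` over a field `k`, nonzero scalars
`α, β`, and a nonzero element `z` of the Leibniz center, the map
`R(a ⊗ b) = α • (b ⊗ a) + β • (z ⊗ (a·b))` satisfies the quantum Yang-Baxter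
equation iff `A` is a Leibniz algebra. -/
theorem stmt_0 {k A : Type*} [Field k] [AddCommGroup A] [Module k A]
    (m : A →ₗ[k] A →ₗ[k] A)
    (hcomm : ∀ a b : A, m a b = m b a)
    (α β : k) (hα : α ≠ 0) (hβ : β ≠ 0)
    (z : A) (hz : z ≠ 0) (hzl : ∀ a : A, m z a = 0) (hzr : ∀ a : A, m a z = 0)
    (R : A ⊗[k] A →ₗ[k] A ⊗[k] A)
    (hR : ∀ a b : A, R (a ⊗ₜ[k] b) = α • (b ⊗ₜ[k] a) + β • (z ⊗ₜ[k] m a b))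
    (R12 R23 : (A ⊗[k] A) ⊗[k] A →ₗ[k] (A ⊗[k] A) ⊗[k] A)
    (hR12 : R12 = TensorProduct.map R LinearMap.id)
    (hR23 : R23 = (TensorProduct.assoc k A A A).symm.toLinearMap ∘ₗ
      TensorProduct.map LinearMap.id R ∘ₗ (TensorProduct.assoc k A A A).toLinearMap) :
    R12 ∘ₗ R23 ∘ₗ R12 = R23 ∘ₗ R12 ∘ₗ R23 ↔
      (∀ a b c : A, m (m a b) c = m a (m b c) + m (m a c) b) :=
  stmt_0_general m α β hα hβ z hz hzl hzr R hR R12 R23 hR12 hR23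
end

section
/- Let V be a vector space over a field k, f ∈ End(V) with f² = 0, and v₀ ∈ Ker(f). Then the vector space k × V with multiplication (p,x)·(q,y) := (0, pq·v₀ + p·f(y) + q·f(x)) is a Jacobi-Jordan algebra; moreover, for any three elements u, v, w of this algebra, u·(v·w) = 0. -/
/-!
Every product has the form `(0, z)` with `z ∈ k ∙ v₀ + range f ⊆ ker f`, and multiplying by an
element `(0, z)` only produces `f z`. Hence all triple products vanish, and the Jacobi identity
is a sum of three zeros.
-/

namespace LinearMap

variable {k V : Type*} [CommSemiring k] [AddCommMonoid V] [Module k V]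

def nilSquareMul (f : V →ₗ[k] V) (v₀ : V) (p q : k × V) : k × V :=
  (0, (p.1 * q.1) • v₀ + p.1 • f q.2 + q.1 • f p.2)

theorem nilSquareMul_comm (f : V →ₗ[k] V) (v₀ : V) (p q : k × V) :
    nilSquareMul f v₀ p q = nilSquareMul f v₀ q p := by
  simp only [nilSquareMul, mul_comm p.1, add_right_comm _ (p.1 • f q.2)]

theorem nilSquareMul_zero_fst (f : V →ₗ[k] V) (v₀ : V) (p : k × V) (z : V) :
    nilSquareMul f v₀ p (0, z) = (0, p.1 • f z) := by
  simp [nilSquareMul]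

theorem map_snd_nilSquareMul {f : V →ₗ[k] V} (hf : f ∘ₗ f = 0) {v₀ : V} (hv₀ : f v₀ = 0)
    (p q : k × V) : f (nilSquareMul f v₀ p q).2 = 0 := by
  have hff (x : V) : f (f x) = 0 := LinearMap.congr_fun hf x
  simp [nilSquareMul, hff, hv₀]

theorem nilSquareMul_nilSquareMul {f : V →ₗ[k] V} (hf : f ∘ₗ f = 0) {v₀ : V} (hv₀ : f v₀ = 0)
    (u v w : k × V) : nilSquareMul f v₀ u (nilSquareMul f v₀ v w) = 0 := by
  calc nilSquareMul f v₀ u (nilSquareMul f v₀ v w)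
      = (0, u.1 • f (nilSquareMul f v₀ v w).2) := nilSquareMul_zero_fst f v₀ u _
    _ = 0 := by rw [map_snd_nilSquareMul hf hv₀, smul_zero, Prod.mk_zero_zero]

end LinearMap

open LinearMap in
/-- For a vector space `V`, `f ∈ End(V)` with `f² = 0` and
`v₀ ∈ Ker f`, the space `k × V` with multiplication
`(p,x)·(q,y) = (0, pq·v₀ + p·f(y) + q·f(x))` is a Jacobi-Jordan algebra, and
moreover all triple products `u·(v·w)` vanish. -/
theorem stmt_2 {k V : Type*} [Field k] [AddCommGroup V] [Module k V]
    (f : V →ₗ[k] V) (hf : f ∘ₗ f = 0) (v₀ : V) (hv₀ : f v₀ = 0)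
    (mul : k × V → k × V → k × V)
    (hmul : ∀ p q : k × V,
      mul p q = (0, (p.1 * q.1) • v₀ + p.1 • f q.2 + q.1 • f p.2)) :
    (∀ u v : k × V, mul u v = mul v u) ∧
    (∀ u v w : k × V, mul u (mul v w) + mul v (mul w u) + mul w (mul u v) = 0) ∧
    (∀ u v w : k × V, mul u (mul v w) = 0) := by
  obtain rfl : mul = nilSquareMul f v₀ := funext₂ hmul
  have triple := nilSquareMul_nilSquareMul hf hv₀
  exact ⟨nilSquareMul_comm f v₀, fun u v w => by simp only [triple, add_zero], triple⟩
end

section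
/- Every Jacobi-Jordan algebra over a field of characteristic ≠ 2 is a Jordan algebra: if A is commutative and satisfies the Jacobi identity a·(b·c) + b·(c·a) + c·(a·b) = 0, then ((a·a)·b)·a = (a·a)·(b·a) for all a, b ∈ A. -/
/-!
Putting `b = a` in the Jacobi identity gives `2 a(ab) = -(a²)b`. Multiplying this by `a`, and
comparing with the same identity applied to `ab` in place of `b`, computes `2 a(a(ab))` in two
ways; hence `a((a²)b) = (a²)(ab)`, which is the Jordan identity up to commutativity.
-/

section JacobiJordan

variable {R A : Type*} [CommSemiring R] [AddCommGroup A] [Module R A] {m : A →ₗ[R] A →ₗ[R] A}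

theorem jacobi_diagonal (hcomm : ∀ a b : A, m a b = m b a)
    (hjac : ∀ a b c : A, m a (m b c) + m b (m c a) + m c (m a b) = 0) (a b : A) :
    m a (m a b) + m a (m a b) = -m (m a a) b := by
  have h := hjac a a b
  rw [hcomm b a, hcomm b (m a a)] at h
  exact eq_neg_of_add_eq_zero_left h

theorem apply_apply_self_comm (hcomm : ∀ a b : A, m a b = m b a)
    (hjac : ∀ a b c : A, m a (m b c) + m b (m c a) + m c (m a b) = 0) (a b : A) :
    m a (m (m a a) b) = m (m a a) (m a b) := by
  have outer : m a (m a (m a b)) + m a (m a (m a b)) = -m a (m (m a a) b) := by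
    rw [← map_add, jacobi_diagonal hcomm hjac a b, map_neg]
  exact neg_inj.mp (outer.symm.trans (jacobi_diagonal hcomm hjac a (m a b)))

end JacobiJordan

theorem stmt_3_general {k A : Type*} [Field k] [AddCommGroup A] [Module k A]
    (m : A →ₗ[k] A →ₗ[k] A)
    (hcomm : ∀ a b : A, m a b = m b a)
    (hjac : ∀ a b c : A, m a (m b c) + m b (m c a) + m c (m a b) = 0) :
    ∀ a b : A, m (m (m a a) b) a = m (m a a) (m b a) := by
  intro a b
  rw [hcomm _ a, hcomm b a]
  exact apply_apply_self_comm hcomm hjac a b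

/-- Every Jacobi-Jordan algebra over a field of characteristic ≠ 2
is a Jordan algebra: `((a·a)·b)·a = (a·a)·(b·a)`. -/
theorem stmt_3 {k A : Type*} [Field k] [AddCommGroup A] [Module k A]
    (h2 : (2 : k) ≠ 0)
    (m : A →ₗ[k] A →ₗ[k] A)
    (hcomm : ∀ a b : A, m a b = m b a)
    (hjac : ∀ a b c : A, m a (m b c) + m b (m c a) + m c (m a b) = 0) :
    ∀ a b : A, m (m (m a a) b) a = m (m a a) (m b a) :=
  stmt_3_general m hcomm hjac
end

section
/- The commutative Heisenberg Jacobi-Jordan algebra 𝔥(2n+1, k), with basis {e₁,…,eₙ, f₁,…,fₙ, z} and multiplication eᵢ·fᵢ = fᵢ·eᵢ = z (all other products of basis elements zero), is not Frobenius: every invariant bilinear form B on 𝔥(2n+1, k) satisfies B(z, c) = 0 for all c, hence is degenerate. -/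
/-!
With `e = e₁`, `f = f₁` one has `z = e·f`, and `f·c` is a multiple `t·z = (t e)·f` of `z`.
Moving products across `B` by invariance,
`B(z, c) = B(e, f·c) = B(e, (t e)·f) = B(e·(t e), f) = 0`, since `e·e = 0`.
-/

theorem invariant_apply_mul_eq_zero {k A : Type*} [CommSemiring k] [AddCommMonoid A]
    [Module k A] {mul : A → A → A} {B : A →ₗ[k] A →ₗ[k] k}
    (hinv : ∀ a b c, B (mul a b) c = B a (mul b c)) {e f c d : A}
    (hfc : mul f c = mul d f) (hed : mul e d = 0) : B (mul e f) c = 0 := by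
  rw [hinv, hfc, ← hinv, hed, map_zero, LinearMap.zero_apply]

namespace Heisenberg

variable {k : Type*} [CommSemiring k] {n : ℕ}

/-- Coordinates `(x, y, s)` stand for `∑ xᵢ eᵢ + ∑ yᵢ fᵢ + s z`. -/
abbrev Space (k : Type*) (n : ℕ) := (Fin n → k) × (Fin n → k) × k

def mul (p q : Space k n) : Space k n :=
  (0, 0, ∑ i, (p.1 i * q.2.1 i + q.1 i * p.2.1 i))

def e (j : Fin n) : Space k n := (Pi.single j 1, 0, 0)

def f (j : Fin n) : Space k n := (0, Pi.single j 1, 0)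

theorem mul_e_f (j : Fin n) : mul (e j) (f j) = ((0, 0, 1) : Space k n) := by
  simp [mul, e, f, Pi.single_apply]

theorem mul_f_eq_mul_smul_e_f (j : Fin n) (c : Space k n) :
    mul (f j) c = mul (c.1 j • e j) (f j) := by
  simp [mul, e, f, Pi.single_apply, mul_comm]

theorem mul_e_smul_e (j : Fin n) (t : k) : mul (e j) (t • e j) = (0 : Space k n) := by
  simp [mul, e]

theorem invariant_apply_z_eq_zero {B : Space k n →ₗ[k] Space k n →ₗ[k] k}
    (hinv : ∀ a b c, B (mul a b) c = B a (mul b c)) (j : Fin n) (c : Space k n) :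
    B (0, 0, 1) c = 0 := by
  rw [← mul_e_f j]
  exact invariant_apply_mul_eq_zero hinv (mul_f_eq_mul_smul_e_f j c) (mul_e_smul_e j _)

end Heisenberg

/-- The commutative Heisenberg Jacobi-Jordan algebra `𝔥(2n+1,k)`
(realized on `(Fin n → k) × (Fin n → k) × k`, with `eᵢ·fᵢ = z` and all other
basis products zero) is not Frobenius: every invariant bilinear form `B`
satisfies `B(z, c) = 0` for all `c`, hence is degenerate. -/
theorem stmt_8 {k : Type*} [Field k] {n : ℕ} (hn : 0 < n)
    (mul : ((Fin n → k) × (Fin n → k) × k) → ((Fin n → k) × (Fin n → k) × k) →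
      ((Fin n → k) × (Fin n → k) × k))
    (hmul : ∀ p q : (Fin n → k) × (Fin n → k) × k,
      mul p q = (0, 0, ∑ i, (p.1 i * q.2.1 i + q.1 i * p.2.1 i)))
    (B : ((Fin n → k) × (Fin n → k) × k) →ₗ[k]
      ((Fin n → k) × (Fin n → k) × k) →ₗ[k] k)
    (hinv : ∀ a b c : (Fin n → k) × (Fin n → k) × k,
      B (mul a b) c = B a (mul b c)) :
    (∀ c : (Fin n → k) × (Fin n → k) × k, B ((0, 0, 1)) c = 0) ∧
    ∃ a : (Fin n → k) × (Fin n → k) × k, a ≠ 0 ∧ ∀ b, B a b = 0 := by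
  obtain rfl : mul = Heisenberg.mul := funext fun p => funext fun q => hmul p q
  have hz := Heisenberg.invariant_apply_z_eq_zero hinv ⟨0, hn⟩
  exact ⟨hz, (0, 0, 1), by simp [Prod.ext_iff], hz⟩
end

section
/- Let A be a 2-dimensional algebra over k with basis {e₁, e₂} and multiplication determined by e₁·e₁ = e₂ (all other products of basis elements zero, multiplication commutative). Then A is a Jacobi-Jordan algebra and the symmetric bilinear form B with B(e₁,e₂) = B(e₂,e₁) = B(e₁,e₁) = 1, B(e₂,e₂) = 0 is nondegenerate and invariant; hence A is a Frobenius Jacobi-Jordan algebra. -/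
/-! Products lie in `k·e₂` and `e₂` annihilates everything, so every product of three elements
vanishes; this gives the Jacobi identity, and invariance holds because `B(uv, w)` and `B(u, vw)`
both equal `u₁v₁w₁`. Pairing `(a, b)` with `e₂` and `e₁` gives `a` and `a + b`, whence
nondegeneracy. -/

lemma Prod.eq_zero_of_forall_mul_add_mul_add_mul_eq_zero {R : Type*} [CommRing R] (u : R × R)
    (h : ∀ v : R × R, u.1 * v.1 + u.1 * v.2 + u.2 * v.1 = 0) : u = 0 := by
  obtain ⟨a, b⟩ := u
  have ha : a = 0 := by simpa using h (0, 1)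
  have hab : a + b = 0 := by simpa using h (1, 0)
  ext
  · exact ha
  · simpa [ha] using hab

/-- The 2-dimensional algebra on `k × k` with basis `e₁ = (1,0)`,
`e₂ = (0,1)` and multiplication determined by `e₁·e₁ = e₂` (so
`(a,b)·(c,d) = (0, a·c)`) is a Jacobi-Jordan algebra, and the symmetric
bilinear form with `B(e₁,e₂) = B(e₂,e₁) = B(e₁,e₁) = 1`, `B(e₂,e₂) = 0`
(so `B((a,b),(c,d)) = a*c + a*d + b*c`) is nondegenerate and invariant;
hence this algebra is Frobenius. -/
theorem stmt_9 {k : Type*} [Field k]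
    (mul : k × k → k × k → k × k)
    (hmul : ∀ p q : k × k, mul p q = (0, p.1 * q.1))
    (B : k × k → k × k → k)
    (hB : ∀ p q : k × k, B p q = p.1 * q.1 + p.1 * q.2 + p.2 * q.1) :
    (∀ u v : k × k, mul u v = mul v u) ∧
    (∀ u v w : k × k, mul u (mul v w) + mul v (mul w u) + mul w (mul u v) = 0) ∧
    (B (1, 0) (0, 1) = 1 ∧ B (0, 1) (1, 0) = 1 ∧ B (1, 0) (1, 0) = 1 ∧
      B (0, 1) (0, 1) = 0) ∧
    (∀ u : k × k, (∀ v : k × k, B u v = 0) → u = 0) ∧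
    (∀ u v w : k × k, B (mul u v) w = B u (mul v w)) := by
  have triple_product_eq_zero : ∀ u v w : k × k, mul u (mul v w) = 0 := by
    simp [hmul]
  refine ⟨fun u v => by rw [hmul, hmul, mul_comm], fun u v w => by simp [triple_product_eq_zero],
    by simp [hB], fun u h => ?_, fun u v w => by simp only [hB, hmul]; ring⟩
  exact u.eq_zero_of_forall_mul_add_mul_add_mul_eq_zero fun v => hB u v ▸ h v
end

section
/- Let A be a Jacobi-Jordan algebra, V a vector space, and (▷, ϑ, ·_V) a triple of bilinear maps ▷ : A × V → V, ϑ : A × A → V, ·_V : V × V → V. Then A × V with multiplication (a,x)•(b,y) := (a·b, ϑ(a,b) + a▷y + b▷x + x·_V y) is a Jacobi-Jordan algebra if and only if: (J1) (V, ·_V) is a Jacobi-Jordan algebra and ϑ is symmetric; (J2) (a·b)▷x + a▷(b▷x) + b▷(a▷x) + x ·_V ϑ(a,b) = 0; (J3) a▷(x ·_V y) + x ·_V (a▷y) + y ·_V (a▷x) = 0; (J4) the cyclic sum over (a,b,c) of ϑ(a, b·c) + a▷ϑ(b,c) vanishes; for all a, b, c ∈ A, x, y ∈ V. -/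
/-!
The `A`-component of the crossed product is the multiplication of `A`, so all conditions live in
the `V`-component. There, commutativity amounts to the symmetry of `ϑ` and `·_V`, and the Jacobi sum
of `(a,x), (b,y), (c,z)` expands, as an identity, into the (J4)-defect (`cocycleDefect`) of
`a, b, c`, three (J2)-defects (`representationDefect`), three (J3)-defects (`derivationDefect`) and
the Jacobi sum of `x, y, z` in `V`. Conversely, setting all but one or two of the six entries to
zero isolates each single defect.
-/

section CrossedProduct

variable {k A V : Type*} [CommSemiring k] [AddCommMonoid A] [Module k A]
  [AddCommMonoid V] [Module k V]
  (m : A →ₗ[k] A →ₗ[k] A) (act : A →ₗ[k] V →ₗ[k] V) (θ : A →ₗ[k] A →ₗ[k] V)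
  (mv : V →ₗ[k] V →ₗ[k] V)

def crossedMul (p q : A × V) : A × V :=
  (m p.1 q.1, θ p.1 q.1 + act p.1 q.2 + act q.1 p.2 + mv p.2 q.2)

def representationDefect (a b : A) (x : V) : V :=
  act (m a b) x + act a (act b x) + act b (act a x) + mv x (θ a b)

def derivationDefect (a : A) (x y : V) : V :=
  act a (mv x y) + mv x (act a y) + mv y (act a x)

def cocycleDefect (a b c : A) : V :=
  θ a (m b c) + θ b (m c a) + θ c (m a b) + act a (θ b c) + act b (θ c a) + act c (θ a b)

theorem crossedMul_comm_iff (hm : ∀ a b : A, m a b = m b a) :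
    (∀ p q : A × V, crossedMul m act θ mv p q = crossedMul m act θ mv q p) ↔
      (∀ x y : V, mv x y = mv y x) ∧ ∀ a b : A, θ a b = θ b a := by
  constructor
  · intro h
    refine ⟨fun x y => ?_, fun a b => ?_⟩
    · simpa [crossedMul] using congrArg Prod.snd (h (0, x) (0, y))
    · simpa [crossedMul] using congrArg Prod.snd (h (a, 0) (b, 0))
  · rintro ⟨hmv, hθ⟩ p q
    refine Prod.ext (hm _ _) ?_
    simp only [crossedMul]
    rw [hθ p.1, hmv p.2]
    abel

theorem crossedMul_jacobi_snd (p q r : A × V) :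
    (crossedMul m act θ mv p (crossedMul m act θ mv q r) +
        crossedMul m act θ mv q (crossedMul m act θ mv r p) +
        crossedMul m act θ mv r (crossedMul m act θ mv p q)).2 =
      cocycleDefect m act θ p.1 q.1 r.1 +
        representationDefect m act θ mv q.1 r.1 p.2 +
        representationDefect m act θ mv r.1 p.1 q.2 +
        representationDefect m act θ mv p.1 q.1 r.2 +
        derivationDefect act mv p.1 q.2 r.2 + derivationDefect act mv q.1 r.2 p.2 +
        derivationDefect act mv r.1 p.2 q.2 +
        (mv p.2 (mv q.2 r.2) + mv q.2 (mv r.2 p.2) + mv r.2 (mv p.2 q.2)) := by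
  simp only [crossedMul, cocycleDefect, representationDefect, derivationDefect, map_add,
    Prod.snd_add]
  abel

theorem crossedMul_jacobi_iff
    (hm : ∀ a b c : A, m a (m b c) + m b (m c a) + m c (m a b) = 0) :
    (∀ p q r : A × V,
        crossedMul m act θ mv p (crossedMul m act θ mv q r) +
          crossedMul m act θ mv q (crossedMul m act θ mv r p) +
          crossedMul m act θ mv r (crossedMul m act θ mv p q) = 0) ↔
      (∀ x y z : V, mv x (mv y z) + mv y (mv z x) + mv z (mv x y) = 0) ∧
      (∀ (a b : A) (x : V), representationDefect m act θ mv a b x = 0) ∧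
      (∀ (a : A) (x y : V), derivationDefect act mv a x y = 0) ∧
      ∀ a b c : A, cocycleDefect m act θ a b c = 0 := by
  constructor
  · intro h
    have hsnd := fun p q r =>
      (crossedMul_jacobi_snd m act θ mv p q r).symm.trans (congrArg Prod.snd (h p q r))
    simp only [cocycleDefect, representationDefect, derivationDefect] at hsnd ⊢
    refine ⟨fun x y z => ?_, fun a b x => ?_, fun a x y => ?_, fun a b c => ?_⟩
    · simpa using hsnd (0, x) (0, y) (0, z)
    · simpa using hsnd (a, 0) (b, 0) (0, x)
    · simpa using hsnd (a, 0) (0, x) (0, y)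
    · simpa using hsnd (a, 0) (b, 0) (c, 0)
  · rintro ⟨hmv, hrep, hder, hcoc⟩ p q r
    refine Prod.ext (hm p.1 q.1 r.1) ?_
    rw [crossedMul_jacobi_snd]
    simp only [hcoc, hrep, hder, hmv, add_zero, Prod.snd_zero]

end CrossedProduct

/-- The crossed-product multiplication
`(a,x)•(b,y) = (a·b, ϑ(a,b) + a▷y + b▷x + x·_V y)` on `A × V` gives a
Jacobi-Jordan algebra iff the axioms (J1)-(J4) hold. -/
theorem stmt_10 {k A V : Type*} [Field k] [AddCommGroup A] [Module k A]
    [AddCommGroup V] [Module k V]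
    (m : A →ₗ[k] A →ₗ[k] A)
    (hcomm : ∀ a b : A, m a b = m b a)
    (hjac : ∀ a b c : A, m a (m b c) + m b (m c a) + m c (m a b) = 0)
    (act : A →ₗ[k] V →ₗ[k] V) (θ : A →ₗ[k] A →ₗ[k] V) (mv : V →ₗ[k] V →ₗ[k] V)
    (mul : A × V → A × V → A × V)
    (hmul : ∀ p q : A × V,
      mul p q = (m p.1 q.1, θ p.1 q.1 + act p.1 q.2 + act q.1 p.2 + mv p.2 q.2)) :
    ((∀ p q : A × V, mul p q = mul q p) ∧
     (∀ p q r : A × V, mul p (mul q r) + mul q (mul r p) + mul r (mul p q) = 0)) ↔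
    (((∀ x y : V, mv x y = mv y x) ∧
      (∀ x y z : V, mv x (mv y z) + mv y (mv z x) + mv z (mv x y) = 0) ∧
      (∀ a b : A, θ a b = θ b a)) ∧
     (∀ (a b : A) (x : V),
        act (m a b) x + act a (act b x) + act b (act a x) + mv x (θ a b) = 0) ∧
     (∀ (a : A) (x y : V),
        act a (mv x y) + mv x (act a y) + mv y (act a x) = 0) ∧
     (∀ a b c : A,
        θ a (m b c) + θ b (m c a) + θ c (m a b) +
        act a (θ b c) + act b (θ c a) + act c (θ a b) = 0)) := by
  obtain rfl : mul = crossedMul m act θ mv := funext₂ hmul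
  rw [crossedMul_comm_iff m act θ mv hcomm, crossedMul_jacobi_iff m act θ mv hjac]
  simp only [representationDefect, derivationDefect, cocycleDefect]
  tauto
end

section
/- Let π : E → A be a surjective linear map from a vector space E onto a Jacobi-Jordan algebra A with kernel V, and suppose E carries a Jacobi-Jordan algebra structure making π an algebra homomorphism. Then there exists a crossed system (▷, ϑ, ·_V) of A by V and an isomorphism of Jacobi-Jordan algebras φ : A # V → E with φ(0,x) = x for x ∈ V and π∘φ = pr_A. -/
/-! A linear section `s` of `π` splits `E` as `s(A) ⊕ V`, so `φ (a, x) = s a + x` is a linear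
isomorphism `A × V ≃ E`. Writing the product of `E` in these coordinates, `π` being
multiplicative forces the `A`-component of `φ⁻¹ (φ p · φ q)` to be `p.1 · q.1`, while
projecting the rest onto `V` along `s(A)` produces `▷`, `ϑ` and `·_V`. Being the transport of
`E`'s product along `φ`, the resulting product on `A × V` is again commutative and satisfies
the Jacobi identity. -/

theorem comm_of_injective_of_map_mul {M N : Type*} {f : M → N} {mul : M → M → M}
    {mN : N → N → N} (hf : Function.Injective f) (hmul : ∀ p q, f (mul p q) = mN (f p) (f q))
    (hc : ∀ u v, mN u v = mN v u) (p q : M) :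
    mul p q = mul q p :=
  hf (by rw [hmul, hmul, hc])

theorem jacobi_of_injective_of_map_mul {M N F : Type*} [AddCommGroup M] [AddCommGroup N]
    [FunLike F M N] [AddMonoidHomClass F M N] {f : F} {mul : M → M → M} {mN : N → N → N}
    (hf : Function.Injective f)
    (hmul : ∀ p q, f (mul p q) = mN (f p) (f q))
    (hj : ∀ u v w, mN u (mN v w) + mN v (mN w u) + mN w (mN u v) = 0) (p q r : M) :
    mul p (mul q r) + mul q (mul r p) + mul r (mul p q) = 0 :=
  hf (by simp only [map_add, hmul, hj, map_zero])

section CrossedProduct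

variable {k A V : Type*} [CommRing k] [AddCommGroup A] [Module k A] [AddCommGroup V]
  [Module k V]

/-- The multiplication of `A # V`. -/
def crossedProductMul (mA : A →ₗ[k] A →ₗ[k] A) (act : A →ₗ[k] V →ₗ[k] V)
    (θ : A →ₗ[k] A →ₗ[k] V) (mV : V →ₗ[k] V →ₗ[k] V) (p q : A × V) : A × V :=
  (mA p.1 q.1, θ p.1 q.1 + act p.1 q.2 + act q.1 p.2 + mV p.2 q.2)

end CrossedProduct

namespace LinearMap

section Splitting

variable {k A E : Type*} [Ring k] [AddCommGroup A] [Module k A] [AddCommGroup E] [Module k E]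
  (π : E →ₗ[k] A) (s : A →ₗ[k] E) (hs : ∀ a, π (s a) = a)

def projKerOfRightInverse : E →ₗ[k] ker π :=
  codRestrict _ (id - s ∘ₗ π) fun u => by simp [hs]

variable {π s hs}

@[simp]
theorem coe_projKerOfRightInverse (u : E) :
    (projKerOfRightInverse π s hs u : E) = u - s (π u) :=
  rfl

@[simp]
theorem projKerOfRightInverse_coe (x : ker π) : projKerOfRightInverse π s hs x = x := by
  ext; simp [mem_ker.1 x.2]

@[simp]
theorem projKerOfRightInverse_section (a : A) : projKerOfRightInverse π s hs (s a) = 0 := by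
  ext; simp [hs]

variable (π s hs)

def prodKerEquivOfRightInverse : (A × ker π) ≃ₗ[k] E :=
  LinearEquiv.ofLinearMap (s ∘ₗ fst k A _ + (ker π).subtype ∘ₗ snd k A _)
    (prod π (projKerOfRightInverse π s hs))
    (by ext u; simp)
    (by
      apply prod_ext
      · ext a <;> simp [hs]
      · ext x <;> simp [mem_ker.1 x.2])

variable {π s hs}

@[simp]
theorem prodKerEquivOfRightInverse_apply (p : A × ker π) :
    prodKerEquivOfRightInverse π s hs p = s p.1 + p.2 :=
  rfl

@[simp]
theorem prodKerEquivOfRightInverse_symm_apply (u : E) :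
    (prodKerEquivOfRightInverse π s hs).symm u = (π u, projKerOfRightInverse π s hs u) :=
  rfl

end Splitting

section CrossedSystem

variable {k A E : Type*} [CommRing k] [AddCommGroup A] [Module k A] [AddCommGroup E]
  [Module k E] (mE : E →ₗ[k] E →ₗ[k] E) (π : E →ₗ[k] A) (s : A →ₗ[k] E)
  (hs : ∀ a, π (s a) = a)

/-- `a ▷ x`: the `V`-component of `s a · x`. -/
def sectionAct : A →ₗ[k] ker π →ₗ[k] ker π :=
  ((mE.compr₂ (projKerOfRightInverse π s hs)) ∘ₗ s).compl₂ (ker π).subtype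

/-- `ϑ(a, b)`: the `V`-component of `s a · s b`. -/
def sectionCocycle : A →ₗ[k] A →ₗ[k] ker π :=
  ((mE.compr₂ (projKerOfRightInverse π s hs)) ∘ₗ s).compl₂ s

def kerMul : ker π →ₗ[k] ker π →ₗ[k] ker π :=
  ((mE.compr₂ (projKerOfRightInverse π s hs)) ∘ₗ (ker π).subtype).compl₂ (ker π).subtype

theorem prodKerEquivOfRightInverse_crossedProductMul (mA : A →ₗ[k] A →ₗ[k] A)
    (hEc : ∀ u v : E, mE u v = mE v u) (hπ : ∀ u v : E, π (mE u v) = mA (π u) (π v))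
    (p q : A × ker π) :
    prodKerEquivOfRightInverse π s hs (crossedProductMul mA (sectionAct mE π s hs)
      (sectionCocycle mE π s hs) (kerMul mE π s hs) p q) =
    mE (prodKerEquivOfRightInverse π s hs p) (prodKerEquivOfRightInverse π s hs q) := by
  obtain ⟨a, x⟩ := p
  obtain ⟨b, y⟩ := q
  have hexpand : mE (s a + x) (s b + y) = mE (s a) (s b) + mE (s a) y + mE (s b) x + mE x y := by
    simp only [map_add, add_apply, hEc x (s b)]
    abel
  rw [← LinearEquiv.eq_symm_apply, prodKerEquivOfRightInverse_symm_apply,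
    prodKerEquivOfRightInverse_apply, prodKerEquivOfRightInverse_apply, hexpand]
  ext
  · simp [crossedProductMul, hπ, hs]
  · simp [crossedProductMul, sectionAct, sectionCocycle, kerMul]

end CrossedSystem

end LinearMap

theorem stmt_11_general {k A E : Type*} [Field k] [AddCommGroup A] [Module k A]
    [AddCommGroup E] [Module k E]
    (mA : A →ₗ[k] A →ₗ[k] A)
    (mE : E →ₗ[k] E →ₗ[k] E)
    (hEc : ∀ u v : E, mE u v = mE v u)
    (hEj : ∀ u v w : E, mE u (mE v w) + mE v (mE w u) + mE w (mE u v) = 0)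
    (π : E →ₗ[k] A) (hsurj : Function.Surjective π)
    (hπ : ∀ u v : E, π (mE u v) = mA (π u) (π v)) :
    ∃ (act : A →ₗ[k] ↥(LinearMap.ker π) →ₗ[k] ↥(LinearMap.ker π))
      (θ : A →ₗ[k] A →ₗ[k] ↥(LinearMap.ker π))
      (mv : ↥(LinearMap.ker π) →ₗ[k] ↥(LinearMap.ker π) →ₗ[k] ↥(LinearMap.ker π))
      (mul : A × ↥(LinearMap.ker π) → A × ↥(LinearMap.ker π) → A × ↥(LinearMap.ker π))
      (φ : (A × ↥(LinearMap.ker π)) ≃ₗ[k] E),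
      (∀ p q : A × ↥(LinearMap.ker π),
        mul p q = (mA p.1 q.1, θ p.1 q.1 + act p.1 q.2 + act q.1 p.2 + mv p.2 q.2)) ∧
      -- the crossed product is a Jacobi-Jordan algebra, i.e. (▷, ϑ, ·_V) is a crossed system
      (∀ p q : A × ↥(LinearMap.ker π), mul p q = mul q p) ∧
      (∀ p q r : A × ↥(LinearMap.ker π),
        mul p (mul q r) + mul q (mul r p) + mul r (mul p q) = 0) ∧
      -- φ is an algebra isomorphism
      (∀ p q : A × ↥(LinearMap.ker π), φ (mul p q) = mE (φ p) (φ q)) ∧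
      -- φ stabilizes V and co-stabilizes A
      (∀ x : ↥(LinearMap.ker π), φ (0, x) = (x : E)) ∧
      (∀ p : A × ↥(LinearMap.ker π), π (φ p) = p.1) := by
  obtain ⟨s, hs⟩ := π.exists_rightInverse_of_surjective (LinearMap.range_eq_top.2 hsurj)
  have hs' : ∀ a, π (s a) = a := LinearMap.congr_fun hs
  let φ := π.prodKerEquivOfRightInverse s hs'
  have hφ_mul := mE.prodKerEquivOfRightInverse_crossedProductMul π s hs' mA hEc hπ
  refine ⟨mE.sectionAct π s hs', mE.sectionCocycle π s hs', mE.kerMul π s hs',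
    crossedProductMul mA (mE.sectionAct π s hs') (mE.sectionCocycle π s hs')
      (mE.kerMul π s hs'), φ,
    fun _ _ => rfl, comm_of_injective_of_map_mul φ.injective hφ_mul hEc,
    jacobi_of_injective_of_map_mul φ.injective hφ_mul hEj, hφ_mul, fun x => by simp [φ],
    fun p => by simp [φ, hs']⟩

/-- If `π : E → A` is a surjective linear map onto a Jacobi-Jordan
algebra `A`, where `E` carries a Jacobi-Jordan algebra structure making `π` an
algebra map, then there is a crossed system `(▷, ϑ, ·_V)` of `A` by
`V = Ker π` and an isomorphism of Jacobi-Jordan algebras `φ : A # V ≅ E` with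
`φ(0,x) = x` for `x ∈ V` and `π ∘ φ = pr_A`. -/
theorem stmt_11 {k A E : Type*} [Field k] [AddCommGroup A] [Module k A]
    [AddCommGroup E] [Module k E]
    (mA : A →ₗ[k] A →ₗ[k] A)
    (hAc : ∀ a b : A, mA a b = mA b a)
    (hAj : ∀ a b c : A, mA a (mA b c) + mA b (mA c a) + mA c (mA a b) = 0)
    (mE : E →ₗ[k] E →ₗ[k] E)
    (hEc : ∀ u v : E, mE u v = mE v u)
    (hEj : ∀ u v w : E, mE u (mE v w) + mE v (mE w u) + mE w (mE u v) = 0)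
    (π : E →ₗ[k] A) (hsurj : Function.Surjective π)
    (hπ : ∀ u v : E, π (mE u v) = mA (π u) (π v)) :
    ∃ (act : A →ₗ[k] ↥(LinearMap.ker π) →ₗ[k] ↥(LinearMap.ker π))
      (θ : A →ₗ[k] A →ₗ[k] ↥(LinearMap.ker π))
      (mv : ↥(LinearMap.ker π) →ₗ[k] ↥(LinearMap.ker π) →ₗ[k] ↥(LinearMap.ker π))
      (mul : A × ↥(LinearMap.ker π) → A × ↥(LinearMap.ker π) → A × ↥(LinearMap.ker π))
      (φ : (A × ↥(LinearMap.ker π)) ≃ₗ[k] E),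
      (∀ p q : A × ↥(LinearMap.ker π),
        mul p q = (mA p.1 q.1, θ p.1 q.1 + act p.1 q.2 + act q.1 p.2 + mv p.2 q.2)) ∧
      -- the crossed product is a Jacobi-Jordan algebra, i.e. (▷, ϑ, ·_V) is a crossed system
      (∀ p q : A × ↥(LinearMap.ker π), mul p q = mul q p) ∧
      (∀ p q r : A × ↥(LinearMap.ker π),
        mul p (mul q r) + mul q (mul r p) + mul r (mul p q) = 0) ∧
      -- φ is an algebra isomorphism
      (∀ p q : A × ↥(LinearMap.ker π), φ (mul p q) = mE (φ p) (φ q)) ∧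
      -- φ stabilizes V and co-stabilizes A
      (∀ x : ↥(LinearMap.ker π), φ (0, x) = (x : E)) ∧
      (∀ p : A × ↥(LinearMap.ker π), π (φ p) = p.1) :=
  stmt_11_general mA mE hEc hEj π hsurj hπ
end

section
/- Let (▷, ϑ, ·_V) and (▷', ϑ', ·'_V) be two crossed systems of a Jacobi-Jordan algebra A by a vector space V, with crossed products A # V and A #' V. Then a linear map ψ : A × V → A × V of the form ψ(a,x) = (a, r(a) + x) for a linear map r : A → V is an algebra morphism A # V → A #' V if and only if: x ·_V y = x ·'_V y; a ▷ x = a ▷' x + r(a) ·'_V x; and ϑ(a,b) + r(a·b) = ϑ'(a,b) + a ▷' r(b) + b ▷' r(a) + r(a) ·'_V r(b), for all a, b ∈ A, x, y ∈ V. Moreover any such ψ is bijective with inverse given by replacing r by -r. -/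
/-!
A linear map fixing `V` pointwise and commuting with the projection to `A` is determined by
its restriction to `A × 0`, whose `V`-component is `r`. Comparing the `V`-components of
`ψ_r (p * q)` and `ψ_r p * ψ_r q` on the pairs `((0,x),(0,y))`, `((a,0),(0,x))`, `((a,0),(b,0))`
gives (CH1)–(CH3); conversely these determine everything by bilinearity, once `·'_V` is known
to be commutative. Shears compose additively, so `ψ_{-r}` inverts `ψ_r`.
-/

namespace CrossedProduct

variable {R A V : Type*}

section Shear

variable [AddCommGroup V]

/-- The map `ψ_r` of the paper. -/
def shear (r : A → V) (p : A × V) : A × V := (p.1, r p.1 + p.2)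

theorem shear_shear (r s : A → V) (p : A × V) : shear r (shear s p) = shear (r + s) p := by
  simp only [shear, Pi.add_apply, add_assoc]

theorem shear_zero (p : A × V) : shear (0 : A → V) p = p := by
  simp only [shear, Pi.zero_apply, zero_add]

def shearEquiv (r : A → V) : A × V ≃ A × V where
  toFun := shear r
  invFun := shear (-r)
  left_inv p := by rw [shear_shear, neg_add_cancel, shear_zero]
  right_inv p := by rw [shear_shear, add_neg_cancel, shear_zero]

end Shear

theorem linearMap_fixes_inr_and_fst_iff [Semiring R] [AddCommMonoid A] [Module R A]
    [AddCommMonoid V] [Module R V] (ψ : A × V →ₗ[R] A × V) :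
    ((∀ x : V, ψ (0, x) = (0, x)) ∧ ∀ p : A × V, (ψ p).1 = p.1) ↔
      ∃ r : A →ₗ[R] V, ∀ p : A × V, ψ p = (p.1, r p.1 + p.2) := by
  constructor
  · rintro ⟨hV, hA⟩
    refine ⟨LinearMap.snd R A V ∘ₗ ψ ∘ₗ LinearMap.inl R A V, fun p => ?_⟩
    have hsplit : ψ p = ψ (p.1, 0) + ψ (0, p.2) := by rw [← map_add, Prod.mk_add_mk]; simp
    rw [hsplit, hV, Prod.ext_iff]
    exact ⟨by simpa using hA (p.1, 0), by simp⟩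
  · rintro ⟨r, hr⟩
    exact ⟨fun x => by simp [hr], fun p => by rw [hr]⟩

section Mul

variable [CommSemiring R] [AddCommMonoid A] [Module R A] [AddCommGroup V] [Module R V]

/-- The multiplication of the crossed product `A # V` of the crossed system `(act, θ, mv)`. -/
def mul (m : A →ₗ[R] A →ₗ[R] A) (act : A →ₗ[R] V →ₗ[R] V) (θ : A →ₗ[R] A →ₗ[R] V)
    (mv : V →ₗ[R] V →ₗ[R] V) (p q : A × V) : A × V :=
  (m p.1 q.1, θ p.1 q.1 + act p.1 q.2 + act q.1 p.2 + mv p.2 q.2)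

theorem shear_mul_iff (m : A →ₗ[R] A →ₗ[R] A)
    (act : A →ₗ[R] V →ₗ[R] V) (θ : A →ₗ[R] A →ₗ[R] V) (mv : V →ₗ[R] V →ₗ[R] V)
    (act' : A →ₗ[R] V →ₗ[R] V) (θ' : A →ₗ[R] A →ₗ[R] V) (mv' : V →ₗ[R] V →ₗ[R] V)
    (hmv' : ∀ x y : V, mv' x y = mv' y x) (r : A →ₗ[R] V) :
    (∀ p q : A × V, shear r (mul m act θ mv p q) = mul m act' θ' mv' (shear r p) (shear r q)) ↔
      ((∀ x y : V, mv x y = mv' x y) ∧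
       (∀ (a : A) (x : V), act a x = act' a x + mv' (r a) x) ∧
       (∀ a b : A, θ a b + r (m a b) =
          θ' a b + act' a (r b) + act' b (r a) + mv' (r a) (r b))) := by
  constructor
  · intro h
    have h_snd : ∀ p q : A × V,
        (shear r (mul m act θ mv p q)).2 = (mul m act' θ' mv' (shear r p) (shear r q)).2 :=
      fun p q => congrArg Prod.snd (h p q)
    refine ⟨fun x y => by simpa [shear, mul] using h_snd (0, x) (0, y),
      fun a x => by simpa [shear, mul] using h_snd (a, 0) (0, x),
      fun a b => ?_⟩
    have hab := h_snd (a, 0) (b, 0)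
    simp only [shear, mul, map_zero, add_zero] at hab
    rw [add_comm (θ a b), hab]
  · rintro ⟨h_mv, h_act, h_θ⟩ p q
    ext
    · rfl
    · simp only [shear, mul, h_mv, h_act p.1, h_act q.1, map_add, LinearMap.add_apply]
      rw [hmv' (r q.1) p.2]
      linear_combination (norm := abel) h_θ p.1 q.1

end Mul

end CrossedProduct

theorem stmt_13_general {k A V : Type*} [Field k] [AddCommGroup A] [Module k A]
    [AddCommGroup V] [Module k V]
    (m : A →ₗ[k] A →ₗ[k] A)
    (act : A →ₗ[k] V →ₗ[k] V) (θ : A →ₗ[k] A →ₗ[k] V) (mv : V →ₗ[k] V →ₗ[k] V)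
    (act' : A →ₗ[k] V →ₗ[k] V) (θ' : A →ₗ[k] A →ₗ[k] V) (mv' : V →ₗ[k] V →ₗ[k] V)
    (mul mul' : A × V → A × V → A × V)
    (hmul : ∀ p q : A × V,
      mul p q = (m p.1 q.1, θ p.1 q.1 + act p.1 q.2 + act q.1 p.2 + mv p.2 q.2))
    (hmul' : ∀ p q : A × V,
      mul' p q = (m p.1 q.1, θ' p.1 q.1 + act' p.1 q.2 + act' q.1 p.2 + mv' p.2 q.2))
    -- both are crossed systems: the crossed products are Jacobi-Jordan algebras
    (hc' : ∀ p q : A × V, mul' p q = mul' q p) :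
    -- linear maps stabilizing V and co-stabilizing A are exactly the ψ_r
    (∀ ψ₀ : A × V →ₗ[k] A × V,
      ((∀ x : V, ψ₀ (0, x) = (0, x)) ∧ (∀ p : A × V, (ψ₀ p).1 = p.1)) ↔
        ∃ r₀ : A →ₗ[k] V, ∀ p : A × V, ψ₀ p = (p.1, r₀ p.1 + p.2)) ∧
    ∀ r : A →ₗ[k] V,
      -- ψ_r is an algebra morphism iff (CH1)-(CH3)
      ((∀ p q : A × V,
          (fun p : A × V => ((p.1 : A), r p.1 + p.2)) (mul p q) =
            mul' ((p.1, r p.1 + p.2)) ((q.1, r q.1 + q.2))) ↔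
        ((∀ x y : V, mv x y = mv' x y) ∧
         (∀ (a : A) (x : V), act a x = act' a x + mv' (r a) x) ∧
         (∀ a b : A, θ a b + r (m a b) =
            θ' a b + act' a (r b) + act' b (r a) + mv' (r a) (r b)))) ∧
      -- ψ_r is bijective with inverse ψ_{-r}
      Function.Bijective (fun p : A × V => ((p.1 : A), r p.1 + p.2)) ∧
      (∀ p : A × V,
        (fun p : A × V => ((p.1 : A), -r p.1 + p.2))
          ((fun p : A × V => ((p.1 : A), r p.1 + p.2)) p) = p) ∧
      (∀ p : A × V,
        (fun p : A × V => ((p.1 : A), r p.1 + p.2))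
          ((fun p : A × V => ((p.1 : A), -r p.1 + p.2)) p) = p) := by
  have hmul_eq : mul = CrossedProduct.mul m act θ mv := funext₂ hmul
  have hmul'_eq : mul' = CrossedProduct.mul m act' θ' mv' := funext₂ hmul'
  have hmv' : ∀ x y : V, mv' x y = mv' y x := fun x y => by
    simpa [hmul'] using congrArg Prod.snd (hc' (0, x) (0, y))
  subst hmul_eq hmul'_eq
  open CrossedProduct in
  exact ⟨linearMap_fixes_inr_and_fst_iff, fun r =>
    ⟨shear_mul_iff m act θ mv act' θ' mv' hmv' r, (shearEquiv r).bijective,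
      (shearEquiv r).left_inv, (shearEquiv r).right_inv⟩⟩

/-- For two crossed systems `(▷, ϑ, ·_V)` and `(▷', ϑ', ·'_V)` of a
Jacobi-Jordan algebra `A` by `V`, the maps `A # V → A #' V` stabilizing `V` and
co-stabilizing `A` are exactly `ψ_r(a,x) = (a, r(a)+x)` for linear `r : A → V`;
`ψ_r` is an algebra morphism iff (CH1), (CH2), (CH3) hold, and any such `ψ_r`
is bijective with inverse `ψ_{-r}`. -/
theorem stmt_13 {k A V : Type*} [Field k] [AddCommGroup A] [Module k A]
    [AddCommGroup V] [Module k V]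
    (m : A →ₗ[k] A →ₗ[k] A)
    (hcomm : ∀ a b : A, m a b = m b a)
    (hjac : ∀ a b c : A, m a (m b c) + m b (m c a) + m c (m a b) = 0)
    (act : A →ₗ[k] V →ₗ[k] V) (θ : A →ₗ[k] A →ₗ[k] V) (mv : V →ₗ[k] V →ₗ[k] V)
    (act' : A →ₗ[k] V →ₗ[k] V) (θ' : A →ₗ[k] A →ₗ[k] V) (mv' : V →ₗ[k] V →ₗ[k] V)
    (mul mul' : A × V → A × V → A × V)
    (hmul : ∀ p q : A × V,
      mul p q = (m p.1 q.1, θ p.1 q.1 + act p.1 q.2 + act q.1 p.2 + mv p.2 q.2))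
    (hmul' : ∀ p q : A × V,
      mul' p q = (m p.1 q.1, θ' p.1 q.1 + act' p.1 q.2 + act' q.1 p.2 + mv' p.2 q.2))
    -- both are crossed systems: the crossed products are Jacobi-Jordan algebras
    (hc : ∀ p q : A × V, mul p q = mul q p)
    (hj : ∀ p q r : A × V, mul p (mul q r) + mul q (mul r p) + mul r (mul p q) = 0)
    (hc' : ∀ p q : A × V, mul' p q = mul' q p)
    (hj' : ∀ p q r : A × V, mul' p (mul' q r) + mul' q (mul' r p) + mul' r (mul' p q) = 0) :
    -- linear maps stabilizing V and co-stabilizing A are exactly the ψ_r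
    (∀ ψ₀ : A × V →ₗ[k] A × V,
      ((∀ x : V, ψ₀ (0, x) = (0, x)) ∧ (∀ p : A × V, (ψ₀ p).1 = p.1)) ↔
        ∃ r₀ : A →ₗ[k] V, ∀ p : A × V, ψ₀ p = (p.1, r₀ p.1 + p.2)) ∧
    ∀ r : A →ₗ[k] V,
      -- ψ_r is an algebra morphism iff (CH1)-(CH3)
      ((∀ p q : A × V,
          (fun p : A × V => ((p.1 : A), r p.1 + p.2)) (mul p q) =
            mul' ((p.1, r p.1 + p.2)) ((q.1, r q.1 + q.2))) ↔
        ((∀ x y : V, mv x y = mv' x y) ∧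
         (∀ (a : A) (x : V), act a x = act' a x + mv' (r a) x) ∧
         (∀ a b : A, θ a b + r (m a b) =
            θ' a b + act' a (r b) + act' b (r a) + mv' (r a) (r b)))) ∧
      -- ψ_r is bijective with inverse ψ_{-r}
      Function.Bijective (fun p : A × V => ((p.1 : A), r p.1 + p.2)) ∧
      (∀ p : A × V,
        (fun p : A × V => ((p.1 : A), -r p.1 + p.2))
          ((fun p : A × V => ((p.1 : A), r p.1 + p.2)) p) = p) ∧
      (∀ p : A × V,
        (fun p : A × V => ((p.1 : A), r p.1 + p.2))
          ((fun p : A × V => ((p.1 : A), -r p.1 + p.2)) p) = p) :=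
  stmt_13_general m act θ mv act' θ' mv' mul mul' hmul hmul' hc'
end

section
/- Let A be a Jacobi-Jordan algebra. There is a bijection between crossed systems of A by the one-dimensional space k and pairs (λ, ϑ) with λ : A → k linear and ϑ : A × A → k symmetric bilinear satisfying λ(a·b) = -2λ(a)λ(b) and Σ_cyc ϑ(a, b·c) + Σ_cyc λ(a)ϑ(b,c) = 0 for all a, b, c ∈ A; the corresponding crossed product A_{(λ,ϑ)} = A × k has multiplication (a,x)•(b,y) = (a·b, ϑ(a,b) + λ(a)y + λ(b)x) and is a Jacobi-Jordan algebra. -/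
/-!
The Jacobi-Jordan identity at `(0, 1), (0, 1), (0, 1)` reads `3 μ(1, 1)² = 0`, so the
multiplication `μ` on `k` vanishes. Every `a ▷ -` is then multiplication by `λ(a) = a ▷ 1`, and
the second components of commutativity at `(a, 0), (b, 0)` and of the Jacobi-Jordan identity at
`(0, 1), (a, 0), (b, 0)` and at `(a, 0), (b, 0), (c, 0)` are exactly the symmetry of `ϑ`,
`λ(ab) = -2 λ(a) λ(b)` and the cocycle condition. Conversely these conditions are all that the
Jacobi-Jordan identity on `A × k` asks beyond the one on `A`.
-/

section

variable {k A : Type*} [Field k] [AddCommGroup A] [Module k A]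

/-- The crossed-product multiplication on `A × k` associated to a crossed data
`(▷, ϑ, ·_k)` of `A` by the one-dimensional space `k`. -/
def crossMul (m : A →ₗ[k] A →ₗ[k] A)
    (t : (A →ₗ[k] k →ₗ[k] k) × (A →ₗ[k] A →ₗ[k] k) × (k →ₗ[k] k →ₗ[k] k)) :
    A × k → A × k → A × k := fun p q =>
  (m p.1 q.1, t.2.1 p.1 q.1 + t.1 p.1 q.2 + t.1 q.1 p.2 + t.2.2 p.2 q.2)

/-- A crossed data is a crossed system when the crossed product is a
Jacobi-Jordan algebra. -/
def IsCrossedSystem (m : A →ₗ[k] A →ₗ[k] A)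
    (t : (A →ₗ[k] k →ₗ[k] k) × (A →ₗ[k] A →ₗ[k] k) × (k →ₗ[k] k →ₗ[k] k)) : Prop :=
  (∀ p q : A × k, crossMul m t p q = crossMul m t q p) ∧
  (∀ p q r : A × k,
    crossMul m t p (crossMul m t q r) + crossMul m t q (crossMul m t r p) +
      crossMul m t r (crossMul m t p q) = 0)

/-- A co-flag datum of `A`: a linear `λ : A → k` and a symmetric bilinear
`ϑ : A × A → k` with `λ(a·b) = -2λ(a)λ(b)` and the cyclic cocycle condition. -/
def IsCoflagDatum (m : A →ₗ[k] A →ₗ[k] A)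
    (p : (A →ₗ[k] k) × (A →ₗ[k] A →ₗ[k] k)) : Prop :=
  (∀ a b : A, p.2 a b = p.2 b a) ∧
  (∀ a b : A, p.1 (m a b) = -(2 * (p.1 a * p.1 b))) ∧
  (∀ a b c : A,
    (p.2 a (m b c) + p.2 b (m c a) + p.2 c (m a b)) +
      (p.1 a * p.2 b c + p.1 b * p.2 c a + p.1 c * p.2 a b) = 0)

abbrev CrossedDatum (k A : Type*) [Field k] [AddCommGroup A] [Module k A] :=
  (A →ₗ[k] k →ₗ[k] k) × (A →ₗ[k] A →ₗ[k] k) × (k →ₗ[k] k →ₗ[k] k)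

theorem LinearMap.apply_eq_mul_apply_one {R : Type*} [CommSemiring R] (f : R →ₗ[R] R) (x : R) :
    f x = x * f 1 := by
  simpa using f.map_smul x 1

theorem LinearMap.bilin_apply_eq_mul_apply_one {R : Type*} [CommSemiring R]
    (f : R →ₗ[R] R →ₗ[R] R) (x y : R) : f x y = x * y * f 1 1 := by
  have hx : f x = x • f 1 := by simpa using f.map_smul x 1
  rw [(f x).apply_eq_mul_apply_one, hx, LinearMap.smul_apply, smul_eq_mul]
  ring

/-- The pair `(λ, ϑ)` read off a crossed datum, with `λ(a) = a ▷ 1`. -/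
def coflagDatum (t : CrossedDatum k A) : (A →ₗ[k] k) × (A →ₗ[k] A →ₗ[k] k) :=
  (t.1.flip 1, t.2.1)

def crossedDatum (p : (A →ₗ[k] k) × (A →ₗ[k] A →ₗ[k] k)) : CrossedDatum k A :=
  (LinearMap.mul k k ∘ₗ p.1, p.2, 0)

theorem crossMul_crossedDatum (m : A →ₗ[k] A →ₗ[k] A) (p : (A →ₗ[k] k) × (A →ₗ[k] A →ₗ[k] k))
    (u v : A × k) :
    crossMul m (crossedDatum p) u v =
      (m u.1 v.1, p.2 u.1 v.1 + p.1 u.1 * v.2 + p.1 v.1 * u.2) := by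
  simp [crossMul, crossedDatum]

theorem coflagDatum_crossedDatum (p : (A →ₗ[k] k) × (A →ₗ[k] A →ₗ[k] k)) :
    coflagDatum (crossedDatum p) = p := by
  ext <;> simp [coflagDatum, crossedDatum]

theorem crossedDatum_coflagDatum {t : CrossedDatum k A} (hμ : t.2.2 = 0) :
    crossedDatum (coflagDatum t) = t := by
  refine Prod.ext ?_ (Prod.ext rfl hμ.symm)
  refine LinearMap.ext fun a => LinearMap.ext fun x => ?_
  simp [crossedDatum, coflagDatum, (t.1 a).apply_eq_mul_apply_one x, mul_comm]

namespace IsCrossedSystem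

variable {m : A →ₗ[k] A →ₗ[k] A} {t : CrossedDatum k A}

theorem mu_eq_zero (h3 : (3 : k) ≠ 0) (ht : IsCrossedSystem m t) : t.2.2 = 0 := by
  have hjac := congrArg Prod.snd (ht.2 (0, 1) (0, 1) (0, 1))
  simp only [crossMul, map_zero, LinearMap.zero_apply, zero_add, Prod.snd_add,
    Prod.snd_zero] at hjac
  rw [t.2.2.bilin_apply_eq_mul_apply_one] at hjac
  have hμ : t.2.2 1 1 = 0 := by
    have : (3 : k) * (t.2.2 1 1 * t.2.2 1 1) = 0 := by linear_combination hjac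
    exact mul_self_eq_zero.1 ((mul_eq_zero.1 this).resolve_left h3)
  ext
  simp [hμ]

theorem isCoflagDatum (h3 : (3 : k) ≠ 0) (ht : IsCrossedSystem m t) :
    IsCoflagDatum m (coflagDatum t) := by
  rw [← crossedDatum_coflagDatum (ht.mu_eq_zero h3)] at ht
  obtain ⟨hcomm, hjac⟩ := ht
  refine ⟨fun a b => ?_, fun a b => ?_, fun a b c => ?_⟩
  · simpa [crossMul_crossedDatum] using congrArg Prod.snd (hcomm (a, 0) (b, 0))
  · have h := congrArg Prod.snd (hjac (0, 1) (a, 0) (b, 0))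
    simp only [crossMul_crossedDatum, map_zero, LinearMap.zero_apply, Prod.snd_add,
      Prod.snd_zero] at h
    linear_combination h
  · have h := congrArg Prod.snd (hjac (a, 0) (b, 0) (c, 0))
    simp only [crossMul_crossedDatum, Prod.snd_add, Prod.snd_zero] at h
    linear_combination h

end IsCrossedSystem

theorem IsCoflagDatum.isCrossedSystem {m : A →ₗ[k] A →ₗ[k] A}
    (hcomm : ∀ a b : A, m a b = m b a)
    (hjac : ∀ a b c : A, m a (m b c) + m b (m c a) + m c (m a b) = 0)
    {p : (A →ₗ[k] k) × (A →ₗ[k] A →ₗ[k] k)} (hp : IsCoflagDatum m p) :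
    IsCrossedSystem m (crossedDatum p) := by
  obtain ⟨hsym, hmul, hcoc⟩ := hp
  refine ⟨fun u v => ?_, fun u v w => ?_⟩
  · rw [crossMul_crossedDatum, crossMul_crossedDatum, hcomm, hsym]
    ext <;> dsimp only
    ring
  · simp only [crossMul_crossedDatum]
    ext
    · exact hjac u.1 v.1 w.1
    · dsimp only [Prod.snd_add, Prod.snd_zero]
      linear_combination hcoc u.1 v.1 w.1 + u.2 * hmul v.1 w.1 + v.2 * hmul w.1 u.1 +
        w.2 * hmul u.1 v.1

def crossedSystemEquivCoflagDatum (h3 : (3 : k) ≠ 0) {m : A →ₗ[k] A →ₗ[k] A}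
    (hcomm : ∀ a b : A, m a b = m b a)
    (hjac : ∀ a b c : A, m a (m b c) + m b (m c a) + m c (m a b) = 0) :
    {t : CrossedDatum k A // IsCrossedSystem m t} ≃
      {p : (A →ₗ[k] k) × (A →ₗ[k] A →ₗ[k] k) // IsCoflagDatum m p} where
  toFun t := ⟨coflagDatum t.1, t.2.isCoflagDatum h3⟩
  invFun p := ⟨crossedDatum p.1, p.2.isCrossedSystem hcomm hjac⟩
  left_inv t := Subtype.ext (crossedDatum_coflagDatum (t.2.mu_eq_zero h3))
  right_inv p := Subtype.ext (coflagDatum_crossedDatum p.1)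

theorem stmt_14_general (h3 : (3 : k) ≠ 0)
    (m : A →ₗ[k] A →ₗ[k] A)
    (hcomm : ∀ a b : A, m a b = m b a)
    (hjac : ∀ a b c : A, m a (m b c) + m b (m c a) + m c (m a b) = 0) :
    ∃ e : {t : (A →ₗ[k] k →ₗ[k] k) × (A →ₗ[k] A →ₗ[k] k) × (k →ₗ[k] k →ₗ[k] k) //
            IsCrossedSystem m t} ≃
          {p : (A →ₗ[k] k) × (A →ₗ[k] A →ₗ[k] k) // IsCoflagDatum m p},
      ∀ t, ∀ p q : A × k,
        crossMul m t.1 p q =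
          (m p.1 q.1, (e t).1.2 p.1 q.1 + (e t).1.1 p.1 * q.2 + (e t).1.1 q.1 * p.2) := by
  refine ⟨crossedSystemEquivCoflagDatum h3 hcomm hjac, fun t p q => ?_⟩
  rw [← crossMul_crossedDatum, ← crossedDatum_coflagDatum (t.2.mu_eq_zero h3)]
  rfl

/-- For a Jacobi-Jordan algebra `A` (char `k ≠ 2, 3`), crossed
systems of `A` by `k` are in bijection with co-flag data `(λ, ϑ)` of `A`, and
the corresponding crossed product `A_{(λ,ϑ)}` has multiplication
`(a,x)•(b,y) = (a·b, ϑ(a,b) + λ(a)y + λ(b)x)`. -/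
theorem stmt_14 (h2 : (2 : k) ≠ 0) (h3 : (3 : k) ≠ 0)
    (m : A →ₗ[k] A →ₗ[k] A)
    (hcomm : ∀ a b : A, m a b = m b a)
    (hjac : ∀ a b c : A, m a (m b c) + m b (m c a) + m c (m a b) = 0) :
    ∃ e : {t : (A →ₗ[k] k →ₗ[k] k) × (A →ₗ[k] A →ₗ[k] k) × (k →ₗ[k] k →ₗ[k] k) //
            IsCrossedSystem m t} ≃
          {p : (A →ₗ[k] k) × (A →ₗ[k] A →ₗ[k] k) // IsCoflagDatum m p},
      ∀ t, ∀ p q : A × k,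
        crossMul m t.1 p q =
          (m p.1 q.1, (e t).1.2 p.1 q.1 + (e t).1.1 p.1 * q.2 + (e t).1.1 q.1 * p.2) :=
  stmt_14_general h3 m hcomm hjac

end
end

section
/- Let k have characteristic ≠ 2, 3, A a vector space regarded as an abelian Jacobi-Jordan algebra A₀, and ϑ, ϑ' two nonzero symmetric bilinear forms on A. The Jacobi-Jordan algebras A_ϑ and A_{ϑ'} on A × k with multiplication (a,x)•(b,y) = (0, ϑ(a,b)) and (0, ϑ'(a,b)) respectively are isomorphic if and only if ϑ and ϑ' are homothetic: there exist s₀ ∈ k* and a linear automorphism ψ of A with s₀·ϑ(a,b) = ϑ'(ψ(a), ψ(b)) for all a, b ∈ A. -/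
/-!
An isomorphism `φ : A_ϑ ≃ A_{ϑ'}` maps the derived algebra `0 × k` (all of it, since `ϑ ≠ 0`)
onto the derived algebra, so `φ (0, 1) = (0, s)` with `s ≠ 0`. Then `a ↦ (φ (a, 0)).1` is a linear
automorphism `ψ` of `A`, and comparing second components of `φ ((a, 0) • (b, 0))` gives
`s • ϑ a b = ϑ' (ψ a) (ψ b)`. Conversely, `ψ × (s₀ • ·)` is an isomorphism `A_ϑ ≃ A_{ϑ'}`.
-/

section

variable {k M N : Type*} [Field k] [AddCommGroup M] [Module k M] [AddCommGroup N] [Module k N]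

lemma LinearEquiv.prod_apply_eq_add_smul (φ : (M × k) ≃ₗ[k] N × k) (a : M) (x : k) :
    φ (a, x) = φ (a, 0) + x • φ (0, 1) := by
  rw [← map_smul, ← map_add]
  simp

lemma LinearEquiv.apply_zero_prod (φ : (M × k) ≃ₗ[k] N × k) (x : k) :
    φ (0, x) = x • φ (0, 1) := by
  rw [← map_smul]
  simp

lemma LinearEquiv.fst_apply_zero_one_eq_zero {θ : M →ₗ[k] M →ₗ[k] k}
    {θ' : N →ₗ[k] N →ₗ[k] k} (hθ : θ ≠ 0) (φ : (M × k) ≃ₗ[k] N × k)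
    (hφ : ∀ p q : M × k, φ ((0 : M), θ p.1 q.1) = ((0 : N), θ' (φ p).1 (φ q).1)) :
    (φ (0, 1)).1 = 0 := by
  obtain ⟨a, b, hab⟩ : ∃ a b, θ a b ≠ 0 := by
    by_contra! h
    exact hθ (LinearMap.ext₂ h)
  have hfst := congrArg Prod.fst (hφ (a, 0) (b, 0))
  rw [φ.apply_zero_prod] at hfst
  exact (smul_eq_zero.mp hfst).resolve_left hab

lemma LinearEquiv.snd_apply_zero_one_ne_zero (φ : (M × k) ≃ₗ[k] N × k)
    (h : (φ (0, 1)).1 = 0) : (φ (0, 1)).2 ≠ 0 := by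
  intro h'
  have : φ (0, 1) = φ 0 := by rw [map_zero]; exact Prod.ext h h'
  simpa using congrArg Prod.snd (φ.injective this)

lemma LinearEquiv.bijective_fst_comp_inl (φ : (M × k) ≃ₗ[k] N × k) (h : (φ (0, 1)).1 = 0) :
    Function.Bijective (LinearMap.fst k N k ∘ₗ φ.toLinearMap ∘ₗ LinearMap.inl k M k) := by
  set s := (φ (0, 1)).2
  have hs : s ≠ 0 := φ.snd_apply_zero_one_ne_zero h
  constructor
  · refine (injective_iff_map_eq_zero _).mpr fun a ha => ?_
    have : φ (a, 0) = φ (0, (φ (a, 0)).2 / s) := by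
      rw [φ.apply_zero_prod]
      exact Prod.ext (by simpa [h] using ha) (by simp [s, hs])
    exact congrArg Prod.fst (φ.injective this)
  · intro b
    refine ⟨(φ.symm (b, 0)).1, ?_⟩
    have := congrArg Prod.fst (φ.prod_apply_eq_add_smul (φ.symm (b, 0)).1 (φ.symm (b, 0)).2)
    simpa [h] using this.symm

lemma exists_homothety_of_linearEquiv_map_mul {θ : M →ₗ[k] M →ₗ[k] k}
    {θ' : N →ₗ[k] N →ₗ[k] k} (hθ : θ ≠ 0) (φ : (M × k) ≃ₗ[k] N × k)
    (hφ : ∀ p q : M × k, φ ((0 : M), θ p.1 q.1) = ((0 : N), θ' (φ p).1 (φ q).1)) :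
    ∃ (s : k) (ψ : M ≃ₗ[k] N), s ≠ 0 ∧ ∀ a b : M, s * θ a b = θ' (ψ a) (ψ b) := by
  have h := φ.fst_apply_zero_one_eq_zero hθ hφ
  refine ⟨(φ (0, 1)).2, .ofBijective _ (φ.bijective_fst_comp_inl h),
    φ.snd_apply_zero_one_ne_zero h, fun a b => ?_⟩
  have hsnd := congrArg Prod.snd (hφ (a, 0) (b, 0))
  rw [φ.apply_zero_prod] at hsnd
  simpa [mul_comm] using hsnd

lemma exists_linearEquiv_map_mul_of_homothety {θ : M →ₗ[k] M →ₗ[k] k}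
    {θ' : N →ₗ[k] N →ₗ[k] k} {s : k} (hs : s ≠ 0) (ψ : M ≃ₗ[k] N)
    (hψ : ∀ a b : M, s * θ a b = θ' (ψ a) (ψ b)) :
    ∃ φ : (M × k) ≃ₗ[k] N × k,
      ∀ p q : M × k, φ ((0 : M), θ p.1 q.1) = ((0 : N), θ' (φ p).1 (φ q).1) :=
  ⟨ψ.prodCongr (LinearEquiv.smulOfNeZero k k s hs), fun p q =>
    Prod.ext (map_zero ψ) (hψ p.1 q.1)⟩

end

theorem stmt_18_general {k A : Type*} [Field k] [AddCommGroup A] [Module k A]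
    (θ θ' : A →ₗ[k] A →ₗ[k] k)
    (hθ0 : θ ≠ 0) :
    (∃ φ : (A × k) ≃ₗ[k] A × k,
        ∀ p q : A × k,
          φ ((0 : A), θ p.1 q.1) = ((0 : A), θ' (φ p).1 (φ q).1)) ↔
    (∃ (s₀ : k) (ψ : A ≃ₗ[k] A),
        s₀ ≠ 0 ∧ ∀ a b : A, s₀ * θ a b = θ' (ψ a) (ψ b)) :=
  ⟨fun ⟨φ, hφ⟩ => exists_homothety_of_linearEquiv_map_mul hθ0 φ hφ,
    fun ⟨_, ψ, hs, hψ⟩ => exists_linearEquiv_map_mul_of_homothety hs ψ hψ⟩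

/-- Over a field of characteristic ≠ 2, 3, for nonzero symmetric
bilinear forms `ϑ, ϑ'` on a vector space `A`, the Jacobi-Jordan algebras `A_ϑ`
and `A_{ϑ'}` on `A × k` (with products `(a,x)•(b,y) = (0, ϑ(a,b))`, resp.
`(0, ϑ'(a,b))`) are isomorphic iff `ϑ` and `ϑ'` are homothetic: there exist
`s₀ ∈ k*` and a linear automorphism `ψ` of `A` with
`s₀·ϑ(a,b) = ϑ'(ψ(a),ψ(b))` for all `a, b`. -/
theorem stmt_18 {k A : Type*} [Field k] [AddCommGroup A] [Module k A]
    (h2 : (2 : k) ≠ 0) (h3 : (3 : k) ≠ 0)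
    (θ θ' : A →ₗ[k] A →ₗ[k] k)
    (hθs : ∀ a b : A, θ a b = θ b a) (hθ's : ∀ a b : A, θ' a b = θ' b a)
    (hθ0 : θ ≠ 0) (hθ'0 : θ' ≠ 0) :
    (∃ φ : (A × k) ≃ₗ[k] A × k,
        ∀ p q : A × k,
          φ ((0 : A), θ p.1 q.1) = ((0 : A), θ' (φ p).1 (φ q).1)) ↔
    (∃ (s₀ : k) (ψ : A ≃ₗ[k] A),
        s₀ ≠ 0 ∧ ∀ a b : A, s₀ * θ a b = θ' (ψ a) (ψ b)) :=
  stmt_18_general θ θ' hθ0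
end
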